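/- Let σ: 𝒜 → ℬ⁺ be a left permutative or right permutative non-erasing morphism between finite alphabets, and let y ∈ ℬ^ℤ. If y has two distinct centered σ-representations, then y is periodic (T^p y = y for some p ≥ 1). -/

import Mathlib

/-!
Read a centered representation as a parsing of `y` into blocks `σ a`, recording at each position
the letter of its block and the offset inside it. For a left permutative `σ`, the pair of states of
two parsings at `n + 1` is a function of the pair at `n`, unless both parsings start a block at
`n + 1`: if only one of them does, the other one continues its block and so knows `y (n + 1)`, the
first letter of the new block, which determines that block. When both start a block at the same
position, left permutativity makes them agree from there on. So either such common block starts are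
unbounded to the left and the parsings coincide, or to the left of some point the pair of states is
a deterministic walk in a finite set, hence periodic, and the period then propagates to all of `ℤ`.
Reversing all words reduces the right permutative case to the left permutative one.
-/

open scoped BigOperators

namespace Recog

variable {A B C : Type*}

/-- A morphism assigning a word to each letter is non-erasing if every image is nonempty. -/
def NonErasing (σ : A → List B) : Prop := ∀ a, σ a ≠ []

/-- Apply a morphism letterwise to a finite word, concatenating the images. -/
def wordApply (σ : A → List B) : List A → List B
  | [] => []
  | a :: w => σ a ++ wordApply σ w

/-- Composition of morphisms `τ ∘ σ`. -/
def comp (τ : B → List C) (σ : A → List B) : A → List C := fun a => wordApply τ (σ a)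

/-- The `ℓ`-th cutting point of the representation `(0, x)`:
`|σ(x_[0,ℓ))|` for `ℓ ≥ 0` and `-|σ(x_[ℓ,0))|` for `ℓ < 0`. -/
def cut (σ : A → List B) (x : ℤ → A) (ℓ : ℤ) : ℤ :=
  if 0 ≤ ℓ then ∑ i ∈ Finset.range ℓ.toNat, ((σ (x i)).length : ℤ)
  else -∑ i ∈ Finset.range (-ℓ).toNat, ((σ (x (-(i : ℤ) - 1))).length : ℤ)

/-- `y` is the bi-infinite image `σ(x)`, where `σ(x₀)` starts at position `0`. -/
def IsSubstPt (σ : A → List B) (x : ℤ → A) (y : ℤ → B) : Prop :=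
  ∀ (ℓ : ℤ) (j : ℕ) (hj : j < (σ (x ℓ)).length),
    y (cut σ x ℓ + j) = (σ (x ℓ)).get ⟨j, hj⟩

/-- `(k, x)` is a `σ`-representation of `y`, i.e. `y = T^k σ(x)`. -/
def IsRep (σ : A → List B) (y : ℤ → B) (k : ℤ) (x : ℤ → A) : Prop :=
  IsSubstPt σ x fun n => y (n - k)

/-- `(k, x)` is a centered `σ`-representation of `y`: `y = T^k σ(x)` with `0 ≤ k < |σ(x₀)|`. -/
def IsCenteredRep (σ : A → List B) (y : ℤ → B) (k : ℤ) (x : ℤ → A) : Prop :=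
  IsRep σ y k x ∧ 0 ≤ k ∧ k < ((σ (x 0)).length : ℤ)

/-- `y` is aperiodic: `T^p y ≠ y` for all `p ≥ 1`. -/
def Aperiodic (y : ℤ → B) : Prop := ∀ p : ℕ, 1 ≤ p → (fun n => y (n + p)) ≠ y

/-- `y` is periodic: `T^p y = y` for some `p ≥ 1`. -/
def Periodic (y : ℤ → B) : Prop := ∃ p : ℕ, 1 ≤ p ∧ (fun n => y (n + p)) = y

/-- The set of `σ`-cutting points of the representation `(k, x)`. -/
def cutSet (σ : A → List B) (x : ℤ → A) (k : ℤ) : Set ℤ :=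
  {m : ℤ | ∃ ℓ : ℤ, m = cut σ x ℓ - k}

/-- `σ` is recognizable in `X`: every `y` has at most one centered `σ`-representation in `X`. -/
def RecIn (σ : A → List B) (X : Set (ℤ → A)) : Prop :=
  ∀ (y : ℤ → B) (k k' : ℤ) (x x' : ℤ → A), x ∈ X → x' ∈ X →
    IsCenteredRep σ y k x → IsCenteredRep σ y k' x' → k = k' ∧ x = x'

/-- `σ` is recognizable in `X` for aperiodic points. -/
def RecInAp (σ : A → List B) (X : Set (ℤ → A)) : Prop :=
  ∀ y : ℤ → B, Aperiodic y → ∀ (k k' : ℤ) (x x' : ℤ → A), x ∈ X → x' ∈ X →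
    IsCenteredRep σ y k x → IsCenteredRep σ y k' x' → k = k' ∧ x = x'

/-- `σ` is left permutative: the first letters of `σ a` and `σ b` differ for distinct `a, b`. -/
def LeftPermutative (σ : A → List B) : Prop :=
  ∀ a b : A, a ≠ b → (σ a).head? ≠ (σ b).head?

/-- `σ` is right permutative: the last letters of `σ a` and `σ b` differ for distinct `a, b`. -/
def RightPermutative (σ : A → List B) : Prop :=
  ∀ a b : A, a ≠ b → (σ a).getLast? ≠ (σ b).getLast?

/-- `σ` and `σ'` are rotationally conjugate. -/
def RotConj (σ σ' : A → List B) : Prop :=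
  ∃ w : List B, (∀ a, σ a ++ w = w ++ σ' a) ∨ (∀ a, w ++ σ a = σ' a ++ w)

/-- The incidence matrix of `σ`, over `ℚ`: entry `(b, a)` counts occurrences of `b` in `σ a`. -/
noncomputable def incidence (σ : A → List B) [DecidableEq B] : Matrix B A ℚ :=
  Matrix.of fun b a => ((σ a).count b : ℚ)

/-- The finite subword `x_[i, i+m)` of a bi-infinite sequence. -/
def factor (x : ℤ → A) (i : ℤ) (m : ℕ) : List A := (List.range m).map fun j => x (i + j)

/-- The language of a bi-infinite sequence: the set of its finite subwords. -/
def lang (x : ℤ → A) : Set (List A) := {w | ∃ (i : ℤ) (m : ℕ), w = factor x i m}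

/-- `σ` is injective on bi-infinite sequences. -/
def InjZ (σ : A → List B) : Prop :=
  ∀ (x x' : ℤ → A) (y : ℤ → B), IsSubstPt σ x y → IsSubstPt σ x' y → x = x'

/-- Cutting points for one-sided sequences. -/
def cutN (σ : A → List B) (x : ℕ → A) (ℓ : ℕ) : ℕ :=
  ∑ i ∈ Finset.range ℓ, (σ (x i)).length

/-- `y` is the one-sided image `σ(x)` for `x : ℕ → A`. -/
def IsSubstPtN (σ : A → List B) (x : ℕ → A) (y : ℕ → B) : Prop :=
  ∀ (ℓ j : ℕ) (hj : j < (σ (x ℓ)).length),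
    y (cutN σ x ℓ + j) = (σ (x ℓ)).get ⟨j, hj⟩

/-- `σ` is injective on one-sided (right-infinite) sequences. -/
def InjN (σ : A → List B) : Prop :=
  ∀ (x x' : ℕ → A) (y : ℕ → B), IsSubstPtN σ x y → IsSubstPtN σ x' y → x = x'

/-- The total length `⦀σ⦀ = Σ_a |σ a|`. -/
def totalLen (σ : A → List B) [Fintype A] : ℕ := ∑ a, (σ a).length

/-- `X` is invariant under the two-sided shift. -/
def ShiftInvariant (X : Set (ℤ → A)) : Prop :=
  ∀ x ∈ X, (fun n => x (n + 1)) ∈ X ∧ (fun n => x (n - 1)) ∈ X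

/-- The iterate `σ^n` of a substitution, applied to a letter. -/
def iter (σ : A → List A) : ℕ → A → List A
  | 0, a => [a]
  | n + 1, a => wordApply (iter σ n) (σ a)

/-- The language `ℒ_σ` of a substitution: subwords of the `σ^n(a)`. -/
def subLang (σ : A → List A) : Set (List A) := {w | ∃ (n : ℕ) (a : A), w <:+: iter σ n a}

/-- The substitutive shift `X_σ`. -/
def subX (σ : A → List A) : Set (ℤ → A) := {x | ∀ w ∈ lang x, w ∈ subLang σ}

/-- `σ` is recognizable in the sense of Mossé for `x`. -/
def MosseRec (σ : A → List B) (x : ℤ → A) : Prop :=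
  ∃ ℓ : ℕ, ∀ y : ℤ → B, IsSubstPt σ x y →
    ∀ m ∈ cutSet σ x 0, ∀ m' : ℤ,
      factor y (m - ℓ) (2 * ℓ) = factor y (m' - ℓ) (2 * ℓ) → m' ∈ cutSet σ x 0

section Sadic

variable {𝒜 : ℕ → Type*}

/-- `block σ N = σ_[0,N)`, mapping a letter of `𝒜 N` to a word over `𝒜 0`. -/
def block (σ : ∀ n, 𝒜 (n + 1) → List (𝒜 n)) : ∀ N, 𝒜 N → List (𝒜 0)
  | 0, a => [a]
  | N + 1, a => wordApply (block σ N) (σ N a)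

/-- `blockFrom σ n k = σ_[n,n+k)`, mapping a letter of `𝒜 (n+k)` to a word over `𝒜 n`. -/
def blockFrom (σ : ∀ n, 𝒜 (n + 1) → List (𝒜 n)) (n k : ℕ) : 𝒜 (n + k) → List (𝒜 n) :=
  block (𝒜 := fun m => 𝒜 (n + m)) (fun m => σ (n + m)) k

/-- The language `ℒ^(n)_σ` of a directive sequence. -/
def sadicLang (σ : ∀ n, 𝒜 (n + 1) → List (𝒜 n)) (n : ℕ) : Set (List (𝒜 n)) :=
  {w | ∃ (k : ℕ) (a : 𝒜 (n + k)), 1 ≤ k ∧ w <:+: blockFrom σ n k a}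

/-- The shift `X^(n)_σ` of a directive sequence. -/
def sadicX (σ : ∀ n, 𝒜 (n + 1) → List (𝒜 n)) (n : ℕ) : Set (ℤ → 𝒜 n) :=
  {x | ∀ w ∈ lang x, w ∈ sadicLang σ n}

/-- A directive sequence is everywhere growing if `min_a |σ_[0,n)(a)| → ∞`. -/
def EverywhereGrowing (σ : ∀ n, 𝒜 (n + 1) → List (𝒜 n)) : Prop :=
  ∀ m : ℕ, ∃ N : ℕ, ∀ n ≥ N, ∀ a : 𝒜 n, m ≤ (block σ n a).length

end Sadic

end Recog

namespace Recog

variable {A B : Type*}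

section Determinism

variable {S : Type*}

def SuccDeterminedOff (s : ℤ → S) (Z : Set S) : Prop :=
  ∀ m m', s m = s m' → s (m + 1) ∉ Z → s (m + 1) = s (m' + 1)

theorem SuccDeterminedOff.eq_add {s : ℤ → S} {Z : Set S} (hs : SuccDeterminedOff s Z)
    {m m' : ℤ} (hmm' : m < m') (heq : s m = s m') (hZ : ∀ n ≤ m', s n ∉ Z) (i : ℕ) :
    s (m + i) = s (m' + i) := by
  suffices h : s (m + i) = s (m' + i) ∧ ∀ n ≤ m' + i, s n ∉ Z from h.1
  induction i with
  | zero => simpa using ⟨heq, hZ⟩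
  | succ i ih =>
    obtain ⟨ih_eq, ih_Z⟩ := ih
    have hnext : s (m + i + 1) = s (m' + i + 1) := hs _ _ ih_eq (ih_Z _ (by omega))
    push_cast
    rw [← add_assoc, ← add_assoc]
    refine ⟨hnext, fun n hn => ?_⟩
    rcases hn.lt_or_eq with hn | rfl
    · exact ih_Z n (by omega)
    · rw [← hnext]
      exact ih_Z _ (by omega)

theorem SuccDeterminedOff.exists_period {s : ℤ → S} {Z : Set S} (hs : SuccDeterminedOff s Z)
    (hfin : (Set.range s).Finite) {M : ℤ} (hM : ∀ n ≤ M, s n ∉ Z) :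
    ∃ p : ℕ, 1 ≤ p ∧ ∀ n, s (n + p) = s n := by
  have : Finite (Set.range s) := hfin.to_subtype
  -- Some value `v` recurs at `M - t` for infinitely many `t`; any far-left occurrence `M - t`
  -- runs in step with the one at `M - t₂`, hence has period `t₂ - t₁` from there on.
  obtain ⟨v, hv⟩ := Finite.exists_infinite_fiber fun t : ℕ => Set.rangeFactorization s (M - t)
  have hfiber := Set.infinite_coe_iff.mp hv
  have hval : ∀ t ∈ (fun t : ℕ => Set.rangeFactorization s (M - t)) ⁻¹' {v}, s (M - t) = v :=
    fun t ht => congrArg Subtype.val ht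
  obtain ⟨t₁, ht₁⟩ := hfiber.nonempty
  obtain ⟨t₂, ht₂, h₁₂⟩ := hfiber.exists_gt t₁
  refine ⟨t₂ - t₁, by omega, fun n => ?_⟩
  obtain ⟨t, ht, hlt⟩ := hfiber.exists_gt (max t₂ (M - n).toNat)
  have hgap : s (M - t) = s (M - t + (t₂ - t₁ : ℕ)) := by
    have h := hs.eq_add (m := M - t) (m' := M - t₂) (by omega) (by rw [hval t ht, hval t₂ ht₂])
      (fun k hk => hM k (by omega)) (t₂ - t₁)
    rw [h, show M - t₂ + ((t₂ - t₁ : ℕ) : ℤ) = M - t₁ by omega, hval t ht, hval t₁ ht₁]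
  have h := hs.eq_add (by omega) hgap (fun k hk => hM k (by omega)) (n - (M - t)).toNat
  rw [show M - t + ((n - (M - t)).toNat : ℤ) = n by omega] at h
  rw [h]
  congr 1
  omega

end Determinism

theorem existsUnique_le_lt_succ_of_strictMono {f : ℤ → ℤ} (hf : StrictMono f) (m : ℤ) :
    ∃! ℓ, f ℓ ≤ m ∧ m < f (ℓ + 1) := by
  have hsucc : ∀ ℓ, f ℓ < f (ℓ + 1) := fun ℓ => hf (lt_add_one ℓ)
  refine existsUnique_of_exists_of_unique ?_ fun ℓ ℓ' ⟨h₁, h₂⟩ ⟨h₁', h₂'⟩ => ?_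
  · induction m using Int.inductionOn' (b := f 0) with
    | zero => exact ⟨0, le_rfl, hsucc 0⟩
    | succ m _ ih =>
      obtain ⟨ℓ, h₁, h₂⟩ := ih
      rcases (Int.add_one_le_of_lt h₂).lt_or_eq with h | h
      · exact ⟨ℓ, by omega, h⟩
      · exact ⟨ℓ + 1, h.ge, h ▸ hsucc (ℓ + 1)⟩
    | pred m _ ih =>
      obtain ⟨ℓ, h₁, h₂⟩ := ih
      rcases h₁.lt_or_eq with h | h
      · exact ⟨ℓ, by omega, by omega⟩
      · refine ⟨ℓ - 1, ?_, by rw [sub_add_cancel]; omega⟩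
        have := hsucc (ℓ - 1)
        rw [sub_add_cancel] at this
        omega
  · have := hf.lt_iff_lt.mp (h₁.trans_lt h₂')
    have := hf.lt_iff_lt.mp (h₁'.trans_lt h₂)
    omega

theorem cut_zero (σ : A → List B) (x : ℤ → A) : cut σ x 0 = 0 := by
  simp [cut]

theorem cut_of_nonpos (σ : A → List B) (x : ℤ → A) {ℓ : ℤ} (hℓ : ℓ ≤ 0) :
    cut σ x ℓ = -∑ i ∈ Finset.range (-ℓ).toNat, ((σ (x (-(i : ℤ) - 1))).length : ℤ) := by
  rcases hℓ.lt_or_eq with h | rfl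
  · rw [cut, if_neg (by omega)]
  · simp [cut]

theorem cut_succ (σ : A → List B) (x : ℤ → A) (ℓ : ℤ) :
    cut σ x (ℓ + 1) = cut σ x ℓ + (σ (x ℓ)).length := by
  rcases le_or_gt 0 ℓ with h | h
  · rw [cut, cut, if_pos (by omega : (0 : ℤ) ≤ ℓ + 1), if_pos h,
      show (ℓ + 1).toNat = ℓ.toNat + 1 by omega, Finset.sum_range_succ, Int.toNat_of_nonneg h]
  · rw [cut_of_nonpos σ x (by omega : ℓ + 1 ≤ 0), cut_of_nonpos σ x h.le,
      show (-ℓ).toNat = (-(ℓ + 1)).toNat + 1 by omega, Finset.sum_range_succ,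
      show -(((-(ℓ + 1)).toNat : ℕ) : ℤ) - 1 = ℓ by omega]
    ring

theorem cut_pred (σ : A → List B) (x : ℤ → A) (ℓ : ℤ) :
    cut σ x (ℓ - 1) = cut σ x ℓ - (σ (x (ℓ - 1))).length := by
  rw [← sub_add_cancel ℓ 1, cut_succ, add_sub_cancel_right]
  ring

theorem cut_strictMono {σ : A → List B} (hσ : NonErasing σ) (x : ℤ → A) : StrictMono (cut σ x) :=
  strictMono_int_of_lt_succ fun ℓ => by
    rw [cut_succ]
    have := List.length_pos_iff.mpr (hσ (x ℓ))
    omega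

/-- `y` cut into consecutive blocks `σ a`; position `n` lies at offset `pos n` in its block. -/
@[ext]
structure Parsing (σ : A → List B) (y : ℤ → B) where
  letter : ℤ → A
  pos : ℤ → ℕ
  pos_lt : ∀ n, pos n < (σ (letter n)).length
  apply_eq : ∀ n, y n = (σ (letter n))[pos n]'(pos_lt n)
  succ : ∀ n, (pos n + 1 < (σ (letter n)).length ∧ letter (n + 1) = letter n ∧
      pos (n + 1) = pos n + 1) ∨
    (pos n + 1 = (σ (letter n)).length ∧ pos (n + 1) = 0)

namespace Parsing

variable {σ : A → List B} {y : ℤ → B}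

def state (f : Parsing σ y) (n : ℤ) : A × ℕ := (f.letter n, f.pos n)

theorem finite_range_state [Finite A] (f : Parsing σ y) : (Set.range f.state).Finite :=
  (Set.finite_range fun q : Σ a, Fin (σ a).length => (q.1, (q.2 : ℕ))).subset <| by
    rintro _ ⟨n, rfl⟩
    exact ⟨⟨f.letter n, f.pos n, f.pos_lt n⟩, rfl⟩

theorem apply_eq_of_state_eq (f : Parsing σ y) {m m' : ℤ} (h : f.state m = f.state m') :
    y m = y m' := by
  simp only [state, Prod.mk.injEq] at h
  rw [f.apply_eq, f.apply_eq]
  congr 1 <;> simp [h.1, h.2]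

theorem state_succ_eq_of_pos_succ_ne_zero (f : Parsing σ y) {m m' : ℤ}
    (h : f.state m = f.state m') (h0 : f.pos (m + 1) ≠ 0) : f.state (m + 1) = f.state (m' + 1) := by
  simp only [state, Prod.mk.injEq] at h ⊢
  obtain ⟨hl, hp⟩ := h
  rcases f.succ m with ⟨-, hl₁, hp₁⟩ | ⟨-, hz⟩
  · rcases f.succ m' with ⟨-, hl₁', hp₁'⟩ | ⟨hend, -⟩
    · exact ⟨by rw [hl₁, hl₁', hl], by rw [hp₁, hp₁', hp]⟩
    · have hlt := f.pos_lt (m + 1)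
      rw [hl₁, hp₁, hl, hp] at hlt
      omega
  · exact absurd hz h0

theorem head?_eq_of_pos_eq_zero (f : Parsing σ y) {n : ℤ} (h : f.pos n = 0) :
    (σ (f.letter n)).head? = some (y n) := by
  rw [List.head?_eq_getElem?, f.apply_eq n, ← List.getElem?_eq_getElem, h]

theorem letter_eq_of_pos_eq_zero (hσ : LeftPermutative σ) (f g : Parsing σ y) {m m' : ℤ}
    (hf : f.pos m = 0) (hg : g.pos m' = 0) (hy : y m = y m') : f.letter m = g.letter m' := by
  by_contra hne
  exact hσ _ _ hne (by rw [f.head?_eq_of_pos_eq_zero hf, g.head?_eq_of_pos_eq_zero hg, hy])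

theorem state_succ_eq (hσ : LeftPermutative σ) (f g : Parsing σ y) {m m' : ℤ}
    (h : f.state m = g.state m') (hy : y (m + 1) = y (m' + 1)) :
    f.state (m + 1) = g.state (m' + 1) := by
  simp only [state, Prod.mk.injEq] at h ⊢
  obtain ⟨hl, hp⟩ := h
  rcases f.succ m with ⟨flt, fl, fp⟩ | ⟨fend, fz⟩ <;>
    rcases g.succ m' with ⟨glt, gl, gp⟩ | ⟨gend, gz⟩
  · exact ⟨by rw [fl, gl, hl], by rw [fp, gp, hp]⟩
  · rw [hl, hp] at flt
    omega
  · rw [hl, hp] at fend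
    omega
  · exact ⟨letter_eq_of_pos_eq_zero hσ f g fz gz hy, by rw [fz, gz]⟩

theorem eq_of_forall_exists_common_cut (hσ : LeftPermutative σ) {f g : Parsing σ y}
    (h : ∀ M, ∃ n ≤ M, f.pos n = 0 ∧ g.pos n = 0) : f = g := by
  suffices hs : ∀ m, f.state m = g.state m by
    ext m
    exacts [congrArg Prod.fst (hs m), congrArg Prod.snd (hs m)]
  intro m
  obtain ⟨n, hnm, hf, hg⟩ := h m
  induction m, hnm using Int.leInduction with
  | base => simp [state, hf, hg, letter_eq_of_pos_eq_zero hσ f g hf hg rfl]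
  | succ m _ ih => exact state_succ_eq hσ f g ih rfl

theorem periodic_of_common_cuts_bddBelow [Finite A] (hσ : LeftPermutative σ) (f g : Parsing σ y)
    {M : ℤ} (hM : ∀ n ≤ M, f.pos n = 0 → g.pos n ≠ 0) : Periodic y := by
  let s n := (f.state n, g.state n)
  have hdet : SuccDeterminedOff s {q | q.1.2 = 0 ∧ q.2.2 = 0} := by
    intro m m' h h0
    have hf : f.state m = f.state m' := congrArg Prod.fst h
    have hg : g.state m = g.state m' := congrArg Prod.snd h
    rcases not_and_or.mp h0 with hf0 | hg0
    · have hf' := f.state_succ_eq_of_pos_succ_ne_zero hf hf0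
      exact Prod.ext hf' (state_succ_eq hσ g g hg (f.apply_eq_of_state_eq hf'))
    · have hg' := g.state_succ_eq_of_pos_succ_ne_zero hg hg0
      exact Prod.ext (state_succ_eq hσ f f hf (g.apply_eq_of_state_eq hg')) hg'
  have hfin : (Set.range s).Finite :=
    (f.finite_range_state.prod g.finite_range_state).subset (Set.range_pair_subset _ _)
  obtain ⟨p, hp, hper⟩ := hdet.exists_period hfin fun n hn ⟨hf, hg⟩ => hM n hn hf hg
  exact ⟨p, hp, funext fun n => f.apply_eq_of_state_eq (congrArg Prod.fst (hper n))⟩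

theorem periodic_of_ne [Finite A] (hσ : LeftPermutative σ) {f g : Parsing σ y} (hfg : f ≠ g) :
    Periodic y := by
  by_cases h : ∀ M, ∃ n ≤ M, f.pos n = 0 ∧ g.pos n = 0
  · exact absurd (eq_of_forall_exists_common_cut hσ h) hfg
  · push Not at h
    obtain ⟨M, hM⟩ := h
    exact periodic_of_common_cuts_bddBelow hσ f g hM

def rev (f : Parsing σ y) : Parsing (fun a => (σ a).reverse) (fun n => y (-n)) where
  letter n := f.letter (-n)
  pos n := (σ (f.letter (-n))).length - 1 - f.pos (-n)
  pos_lt n := by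
    have := f.pos_lt (-n)
    simp only [List.length_reverse]
    omega
  apply_eq n := by
    have := f.pos_lt (-n)
    rw [List.getElem_reverse, f.apply_eq]
    congr 1
    omega
  succ n := by
    have := f.pos_lt (-n)
    have := f.pos_lt (-(n + 1))
    have hs := f.succ (-(n + 1))
    rw [show -(n + 1) + 1 = -n by ring] at hs
    simp only [List.length_reverse]
    rcases hs with ⟨-, hl, hp⟩ | ⟨hend, hz⟩
    · have hL : (σ (f.letter (-n))).length = (σ (f.letter (-(n + 1)))).length := by rw [hl]
      exact Or.inl ⟨by omega, hl.symm, by omega⟩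
    · exact Or.inr ⟨by omega, by omega⟩

theorem rev_injective : Function.Injective (rev : Parsing σ y → _) := by
  intro f g h
  have hl : f.letter = g.letter := funext fun n => by
    simpa [rev] using congrFun (congrArg letter h) (-n)
  ext n
  · exact congrFun hl n
  · have hp := congrFun (congrArg pos h) (-n)
    have hf := f.pos_lt n
    have hg := g.pos_lt n
    simp only [rev, neg_neg, hl] at hp hf
    omega

def IsInducedBy (f : Parsing σ y) (k : ℤ) (x : ℤ → A) : Prop :=
  ∀ ℓ (j : ℕ), j < (σ (x ℓ)).length →
    f.letter (cut σ x ℓ - k + j) = x ℓ ∧ f.pos (cut σ x ℓ - k + j) = j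

theorem IsInducedBy.letter_cut (hσ : NonErasing σ) {f : Parsing σ y} {k : ℤ} {x : ℤ → A}
    (hf : f.IsInducedBy k x) (ℓ : ℤ) : f.letter (cut σ x ℓ - k) = x ℓ := by
  simpa using (hf ℓ 0 (List.length_pos_iff.mpr (hσ (x ℓ)))).1

theorem IsInducedBy.letter_cut_sub_one (hσ : NonErasing σ) {f : Parsing σ y} {k : ℤ}
    {x : ℤ → A} (hf : f.IsInducedBy k x) (ℓ : ℤ) : f.letter (cut σ x ℓ - k - 1) = x (ℓ - 1) := by
  have hlen := List.length_pos_iff.mpr (hσ (x (ℓ - 1)))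
  have h := (hf (ℓ - 1) _ (Nat.sub_one_lt_of_lt hlen)).1
  rwa [cut_pred, show cut σ x ℓ - ((σ (x (ℓ - 1))).length : ℤ) - k +
    (((σ (x (ℓ - 1))).length - 1 : ℕ) : ℤ) = cut σ x ℓ - k - 1 by omega] at h

theorem IsInducedBy.pos_zero {f : Parsing σ y} {k : ℤ} {x : ℤ → A} (hf : f.IsInducedBy k x)
    (hk : 0 ≤ k ∧ k < ((σ (x 0)).length : ℤ)) : (f.pos 0 : ℤ) = k := by
  have h := (hf 0 k.toNat (by omega)).2
  rw [cut_zero, show 0 - k + (k.toNat : ℤ) = 0 by omega] at h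
  omega

theorem IsInducedBy.unique (hσ : NonErasing σ) {f : Parsing σ y} {k k' : ℤ} {x x' : ℤ → A}
    (hf : f.IsInducedBy k x) (hf' : f.IsInducedBy k' x')
    (hk : 0 ≤ k ∧ k < ((σ (x 0)).length : ℤ)) (hk' : 0 ≤ k' ∧ k' < ((σ (x' 0)).length : ℤ)) :
    k = k' ∧ x = x' := by
  obtain rfl : k = k' := (hf.pos_zero hk).symm.trans (hf'.pos_zero hk')
  have hcut : ∀ ℓ, cut σ x ℓ = cut σ x' ℓ := by
    intro ℓ
    induction ℓ using Int.induction_on with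
    | zero => rw [cut_zero, cut_zero]
    | succ ℓ ih =>
      rw [cut_succ, cut_succ, ← hf.letter_cut hσ, ← hf'.letter_cut hσ, ih]
    | pred ℓ ih =>
      rw [cut_pred, cut_pred, ← hf.letter_cut_sub_one hσ, ← hf'.letter_cut_sub_one hσ, ih]
  exact ⟨rfl, funext fun ℓ => by rw [← hf.letter_cut hσ, ← hf'.letter_cut hσ, hcut]⟩

end Parsing

theorem IsRep.exists_parsing {σ : A → List B} (hσ : NonErasing σ) {y : ℤ → B} {k : ℤ} {x : ℤ → A}
    (h : IsRep σ y k x) : ∃ f : Parsing σ y, f.IsInducedBy k x := by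
  choose I hI hIu using existsUnique_le_lt_succ_of_strictMono (cut_strictMono hσ x)
  have hlen := cut_succ σ x
  have hI_eq : ∀ ℓ (j : ℕ), j < (σ (x ℓ)).length → I (cut σ x ℓ + j) = ℓ := fun ℓ j hj =>
    (hIu _ ℓ ⟨by omega, by rw [hlen]; omega⟩).symm
  have pos_lt : ∀ n, (n + k - cut σ x (I (n + k))).toNat < (σ (x (I (n + k)))).length :=
    fun n => by have := hI (n + k); have := hlen (I (n + k)); omega
  refine ⟨⟨fun n => x (I (n + k)), fun n => (n + k - cut σ x (I (n + k))).toNat, pos_lt,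
    fun n => ?_, fun n => ?_⟩, fun ℓ j hj => ?_⟩
  · have hI' := hI (n + k)
    have h' := h (I (n + k)) _ (pos_lt n)
    dsimp only at h'
    rwa [show cut σ x (I (n + k)) +
      ((n + k - cut σ x (I (n + k))).toNat : ℤ) - k = n by omega] at h'
  · have hI' := hI (n + k)
    have hlen' := hlen (I (n + k))
    rw [show n + 1 + k = n + k + 1 by ring]
    rcases (Int.add_one_le_of_lt hI'.2).lt_or_eq with hlt | heq
    · have : I (n + k + 1) = I (n + k) := (hIu _ _ ⟨by omega, hlt⟩).symm
      exact Or.inl ⟨by omega, by rw [this], by rw [this]; omega⟩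
    · have hlen'' := List.length_pos_iff.mpr (hσ (x (I (n + k) + 1)))
      have : I (n + k + 1) = I (n + k) + 1 :=
        (hIu _ _ ⟨heq.ge, by rw [hlen (I (n + k) + 1), ← heq]; omega⟩).symm
      exact Or.inr ⟨by omega, by rw [this]; omega⟩
  · dsimp only
    rw [show cut σ x ℓ - k + (j : ℤ) + k = cut σ x ℓ + j by ring, hI_eq ℓ j hj]
    exact ⟨rfl, by omega⟩

theorem RightPermutative.reverse {σ : A → List B} (h : RightPermutative σ) :
    LeftPermutative fun a => (σ a).reverse := by
  intro a b hab
  simpa only [List.head?_reverse] using h a b hab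

theorem Periodic.of_comp_neg {y : ℤ → B} (h : Periodic fun n => y (-n)) : Periodic y := by
  obtain ⟨p, hp, hper⟩ := h
  refine ⟨p, hp, funext fun n => ?_⟩
  simpa using (congrFun hper (-(n + p))).symm

end Recog

open Recog in
theorem stmt11_general {A B : Type*} [Fintype A]
    (σ : A → List B) (hσ : NonErasing σ)
    (hperm : LeftPermutative σ ∨ RightPermutative σ)
    (y : ℤ → B) (k k' : ℤ) (x x' : ℤ → A)
    (h1 : IsCenteredRep σ y k x) (h2 : IsCenteredRep σ y k' x')
    (hne : ¬(k = k' ∧ x = x')) :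
    Periodic y := by
  obtain ⟨f, hf⟩ := h1.1.exists_parsing hσ
  obtain ⟨g, hg⟩ := h2.1.exists_parsing hσ
  have hfg : f ≠ g := by
    rintro rfl
    exact hne (hf.unique hσ hg h1.2 h2.2)
  rcases hperm with hl | hr
  · exact Parsing.periodic_of_ne hl hfg
  · exact (Parsing.periodic_of_ne hr.reverse (Parsing.rev_injective.ne hfg)).of_comp_neg

open Recog in
/-- If a left or right permutative morphism admits two distinct centered
σ-representations of `y`, then `y` is periodic. -/
theorem stmt11 {A B : Type*} [Fintype A] [Fintype B]
    (σ : A → List B) (hσ : NonErasing σ)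
    (hperm : LeftPermutative σ ∨ RightPermutative σ)
    (y : ℤ → B) (k k' : ℤ) (x x' : ℤ → A)
    (h1 : IsCenteredRep σ y k x) (h2 : IsCenteredRep σ y k' x')
    (hne : ¬(k = k' ∧ x = x')) :
    Periodic y :=
  stmt11_general σ hσ hperm y k k' x x' h1 h2 hne
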